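/- In the warm-up reduction (all indegrees of H at most 2), a set S ⊆ V_H is a feasible solution to the DVD instance (L, H) — i.e., every path of L vertices in H contains a vertex of S — if and only if S is a feasible bootstrap solution for (L, G). Moreover, if S ⊆ V is any feasible bootstrap solution for (L, G), then S ∩ V_H is a feasible DVD solution for (L, H). Hence the optimal values of the two instances are equal. -/

import Mathlib

/-- Colors of vertices in the circuit DAG. -/
inductive Color where
  | white | blue | red
deriving DecidableEq

/-- Number of red vertices on a path (given as a list of vertices). -/
def redCount {V : Type*} (color : V → Color) (p : List V) : ℕ :=
  (p.filter (fun v => decide (color v = Color.red))).length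

/-- `p` is an interesting path: it starts and ends at red vertices and traverses exactly
`L+1` red vertices. -/
def IntPath {V : Type*} (E : V → V → Prop) (color : V → Color) (L : ℕ) (p : List V) : Prop :=
  ∃ hp : p ≠ [], p.Chain' E ∧ color (p.head hp) = Color.red ∧
    color (p.getLast hp) = Color.red ∧ redCount color p = L + 1

variable {α : Type*} [Fintype α] [DecidableEq α]

/-- Vertex set of the warm-up reduction graph `G`: the original vertices `V_H` (`.inl v`),
their clones `V_H'` (`.inr (.inl v)`), and the white source `s₀` (`.inr (.inr ())`). -/
abbrev WV (α : Type*) := α ⊕ (α ⊕ Unit)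

/-- Colors in the reduction graph: original vertices and clones are red, `s₀` is white. -/
def wcolor : WV α → Color
  | .inl _ => Color.red
  | .inr (.inl _) => Color.red
  | .inr (.inr _) => Color.white

/-- Indegree of a vertex of `H`. -/
def windeg (EH : α → α → Prop) [DecidableRel EH] (v : α) : ℕ :=
  (Finset.univ.filter (fun u => EH u v)).card

/-- Edges of the warm-up reduction graph `G`: the edges of `H`, an edge from each `v` to its
clone `v'`, and an edge from `s₀` to each `v` of indegree at most 1 (so that `v` gets
`2 − indegree_H(v)` parallel copies in the multigraph; parallel multiplicities are
irrelevant for paths). -/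
def WE (EH : α → α → Prop) [DecidableRel EH] : WV α → WV α → Prop
  | .inl u, .inl v => EH u v
  | .inl u, .inr (.inl v) => u = v
  | .inr (.inr _), .inl v => windeg EH v ≤ 1
  | _, _ => False

/-!
A vertex of `G` with an out-edge is not a clone, and a vertex with an in-edge is not `s₀`; since
an interesting path starts at a red vertex, all of its vertices but the last lie in `V_H`. They
form a path of `H`, and the last vertex is red, so this path has exactly `L` vertices.
Conversely, a path of `L` vertices in `H` followed by the clone of its last vertex is an
interesting path. Hence the interesting paths of `G` with their last vertex dropped are exactly
the paths of `L` vertices of `H`: the two feasibility notions agree on subsets of `V_H`, and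
intersecting a bootstrap solution with `V_H` keeps it feasible without enlarging it.
-/

namespace List

variable {β : Type*} {R : β → β → Prop}

theorem IsChain.exists_rel_of_mem_dropLast :
    ∀ {l : List β}, l.IsChain R → ∀ {a : β}, a ∈ l.dropLast → ∃ b, R a b
  | [], _, _, ha | [_], _, _, ha => by simp at ha
  | x :: y :: t, h, a, ha => by
    rw [dropLast_cons_cons, mem_cons] at ha
    rcases ha with rfl | ha
    · exact ⟨y, (isChain_cons_cons.1 h).1⟩
    · exact h.tail.exists_rel_of_mem_dropLast ha

theorem IsChain.exists_rel_of_mem_tail :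
    ∀ {l : List β}, l.IsChain R → ∀ {a : β}, a ∈ l.tail → ∃ b, R b a
  | [], _, _, ha | [_], _, _, ha => by simp at ha
  | x :: y :: t, h, a, ha => by
    rw [tail_cons, mem_cons] at ha
    rcases ha with rfl | ha
    · exact ⟨x, (isChain_cons_cons.1 h).1⟩
    · exact h.tail.exists_rel_of_mem_tail ha

end List

theorem Nat.sInf_eq_sInf_of_forall_exists_le {A B : Set ℕ} (hAB : ∀ a ∈ A, ∃ b ∈ B, b ≤ a)
    (hBA : ∀ b ∈ B, ∃ a ∈ A, a ≤ b) : sInf A = sInf B := by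
  rcases A.eq_empty_or_nonempty with rfl | hA
  · have hB : B = ∅ := Set.eq_empty_of_forall_notMem fun b hb => by simpa using hBA b hb
    rw [hB]
  obtain ⟨b, hb, hba⟩ := hAB _ (Nat.sInf_mem hA)
  obtain ⟨a, ha, hab⟩ := hBA _ (Nat.sInf_mem ⟨b, hb⟩)
  exact le_antisymm ((Nat.sInf_le ha).trans hab) ((Nat.sInf_le hb).trans hba)

section WarmUpReduction

variable {α : Type*}

theorem redCount_map_inl (q : List α) :
    redCount wcolor (q.map Sum.inl : List (WV α)) = q.length := by
  rw [redCount, List.filter_eq_self.2 (by simp [wcolor]), List.length_map]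

variable [Fintype α] (EH : α → α → Prop) [DecidableRel EH]

theorem not_WE_clone (v : α) (z : WV α) : ¬ WE EH (.inr (.inl v)) z := by
  rcases z with _ | _ | _ <;> simp [WE]

theorem not_WE_source (z : WV α) (u : Unit) : ¬ WE EH z (.inr (.inr u)) := by
  rcases z with _ | _ | _ <;> simp [WE]

theorem isChain_map_inl_iff {q : List α} :
    (q.map Sum.inl : List (WV α)).IsChain (WE EH) ↔ q.IsChain EH :=
  List.isChain_map _

theorem exists_isChain_of_intPath {L : ℕ} {p : List (WV α)} (hp : IntPath (WE EH) wcolor L p) :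
    ∃ q : List α, q.IsChain EH ∧ q.length = L ∧ p.dropLast = q.map Sum.inl := by
  obtain ⟨hne, hchain, hhead, hlast, hcount⟩ := hp
  have hleft : ∀ z ∈ p.dropLast, z ∈ Set.range Sum.inl := by
    intro z hz
    rcases z with a | v | u
    · exact ⟨a, rfl⟩
    · obtain ⟨w, hw⟩ := hchain.exists_rel_of_mem_dropLast hz
      exact absurd hw (not_WE_clone EH v w)
    · have hz' := List.dropLast_subset _ hz
      rw [← List.cons_head_tail hne, List.mem_cons] at hz'
      rcases hz' with hz' | hz'
      · simp [← hz', wcolor] at hhead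
      · obtain ⟨y, hy⟩ := hchain.exists_rel_of_mem_tail hz'
        exact absurd hy (not_WE_source EH y u)
  obtain ⟨q, hq⟩ : p.dropLast ∈ Set.range (List.map Sum.inl) := by
    rwa [Set.range_list_map]
  refine ⟨q, (isChain_map_inl_iff EH).1 (hq ▸ hchain.dropLast), ?_, hq.symm⟩
  rw [← List.dropLast_append_getLast hne, redCount, List.filter_append, List.length_append, ← redCount, ← hq,
    redCount_map_inl] at hcount
  simpa [hlast] using hcount

theorem intPath_append_clone {L : ℕ} {q : List α} (hq : q.IsChain EH) (hlen : q.length = L)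
    (hne : q ≠ []) :
    IntPath (WE EH) wcolor L (q.map Sum.inl ++ [.inr (.inl (q.getLast hne))]) := by
  refine ⟨by simp, ?_, ?_, ?_, ?_⟩
  · refine List.isChain_append.2 ⟨(isChain_map_inl_iff EH).2 hq, List.isChain_singleton _, ?_⟩
    intro x hx y hy
    rw [List.getLast?_map, List.getLast?_eq_some_getLast hne] at hx
    simp only [Option.mem_def, Option.map_some, Option.some.injEq, List.head?_cons] at hx hy
    subst hx hy
    rfl
  · obtain ⟨a, q', rfl⟩ := List.exists_cons_of_ne_nil hne
    rfl
  · simp [wcolor]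
  · rw [redCount, List.filter_append, List.length_append, ← redCount, redCount_map_inl]
    simp [wcolor, hlen]

theorem forall_intPath_exists_mem_dropLast_iff {L : ℕ} (hL : 1 ≤ L) (P : WV α → Prop) :
    (∀ p : List (WV α), IntPath (WE EH) wcolor L p → ∃ z ∈ p.dropLast, P z) ↔
      ∀ q : List α, q.IsChain EH → q.length = L → ∃ u ∈ q, P (.inl u) := by
  constructor
  · intro hP q hq hlen
    have hne : q ≠ [] := by rintro rfl; simp at hlen; omega
    obtain ⟨z, hz, hPz⟩ := hP _ (intPath_append_clone EH hq hlen hne)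
    rw [List.dropLast_concat, List.mem_map] at hz
    obtain ⟨u, hu, rfl⟩ := hz
    exact ⟨u, hu, hPz⟩
  · intro hP p hp
    obtain ⟨q, hq, hlen, hdrop⟩ := exists_isChain_of_intPath EH hp
    obtain ⟨u, hu, hPu⟩ := hP q hq hlen
    exact ⟨.inl u, hdrop ▸ List.mem_map_of_mem hu, hPu⟩

end WarmUpReduction

theorem stmt13_general (EH : α → α → Prop) [DecidableRel EH]
    (L : ℕ) (hL : 2 ≤ L) :
    (∀ S : Finset α,
      ((∀ q : List α, q.Chain' EH → q.length = L → ∃ u ∈ q, u ∈ S) ↔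
        (∀ p : List (WV α), IntPath (WE EH) wcolor L p →
          ∃ z ∈ p.dropLast, z ∈ S.image Sum.inl))) ∧
    (∀ S' : Finset (WV α),
      (∀ p : List (WV α), IntPath (WE EH) wcolor L p → ∃ z ∈ p.dropLast, z ∈ S') →
      (∀ q : List α, q.Chain' EH → q.length = L → ∃ u ∈ q, Sum.inl u ∈ S')) ∧
    sInf {n : ℕ | ∃ S : Finset α,
        (∀ q : List α, q.Chain' EH → q.length = L → ∃ u ∈ q, u ∈ S) ∧ S.card = n} =
    sInf {n : ℕ | ∃ S' : Finset (WV α),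
        (∀ p : List (WV α), IntPath (WE EH) wcolor L p → ∃ z ∈ p.dropLast, z ∈ S') ∧
        S'.card = n} := by
  have hits := forall_intPath_exists_mem_dropLast_iff EH (by omega : 1 ≤ L)
  have dvd_iff_bootstrap (S : Finset α) :
      (∀ q : List α, q.IsChain EH → q.length = L → ∃ u ∈ q, u ∈ S) ↔
        ∀ p : List (WV α), IntPath (WE EH) wcolor L p →
          ∃ z ∈ p.dropLast, z ∈ S.image Sum.inl := by
    simp only [hits, Sum.inl_injective.mem_finset_image]
  refine ⟨dvd_iff_bootstrap, fun S' => (hits (· ∈ S')).1,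
    Nat.sInf_eq_sInf_of_forall_exists_le ?_ ?_⟩
  · rintro _ ⟨S, hS, rfl⟩
    exact ⟨_, ⟨S.image Sum.inl, (dvd_iff_bootstrap S).1 hS, rfl⟩,
      (Finset.card_image_of_injective S Sum.inl_injective).le⟩
  · rintro _ ⟨S', hS', rfl⟩
    refine ⟨_, ⟨S'.toLeft, fun q hq hlen => ?_, rfl⟩, Finset.card_toLeft_le⟩
    simpa using (hits (· ∈ S')).1 hS' q hq hlen

/-- in the warm-up reduction (all indegrees of `H` at most 2), `S ⊆ V_H` is a
feasible DVD solution for `(L,H)` iff (viewed inside `G`) it is a feasible bootstrap solution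
for `(L,G)`; moreover for any feasible bootstrap solution `S' ⊆ V`, `S' ∩ V_H` is a feasible
DVD solution; hence the optimal values of the two instances are equal. -/
theorem stmt13 (EH : α → α → Prop) [DecidableRel EH]
    (hdag : WellFounded EH) (L : ℕ) (hL : 2 ≤ L)
    (hdeg : ∀ v : α, windeg EH v ≤ 2) :
    (∀ S : Finset α,
      ((∀ q : List α, q.Chain' EH → q.length = L → ∃ u ∈ q, u ∈ S) ↔
        (∀ p : List (WV α), IntPath (WE EH) wcolor L p →
          ∃ z ∈ p.dropLast, z ∈ S.image Sum.inl))) ∧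
    (∀ S' : Finset (WV α),
      (∀ p : List (WV α), IntPath (WE EH) wcolor L p → ∃ z ∈ p.dropLast, z ∈ S') →
      (∀ q : List α, q.Chain' EH → q.length = L → ∃ u ∈ q, Sum.inl u ∈ S')) ∧
    sInf {n : ℕ | ∃ S : Finset α,
        (∀ q : List α, q.Chain' EH → q.length = L → ∃ u ∈ q, u ∈ S) ∧ S.card = n} =
    sInf {n : ℕ | ∃ S' : Finset (WV α),
        (∀ p : List (WV α), IntPath (WE EH) wcolor L p → ∃ z ∈ p.dropLast, z ∈ S') ∧
        S'.card = n} :=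
  stmt13_general EH L hL
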